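/- Let F be a field with char F ∉ {2,3} and let A be the Matsuo algebra of the affine plane of order 3 over F. If L and M are two distinct parallel lines of the affine plane, then the idempotents e_L and e_M are orthogonal: e_L e_M = 0. Equivalently, f_L f_M = f_L + f_M − 1. -/

import Mathlib

open Finset

/-- The Matsuo algebra `M_{1/2}(P3)` of the affine plane of order 3 over `F`: the free
`F`-module on the point set `P = (ℤ/3)²`, with the commutative bilinear multiplication
determined by `p_u p_u = p_u` and `p_u p_v = (1/4)(p_u + p_v − p_{−u−v})` for `u ≠ v`. -/
noncomputable def mMul (F : Type*) [Field F] (x y : ZMod 3 × ZMod 3 → F) :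
    ZMod 3 × ZMod 3 → F :=
  ∑ u : ZMod 3 × ZMod 3, ∑ v : ZMod 3 × ZMod 3,
    (x u * y v) •
      (if u = v then Pi.single u (1 : F)
       else (4⁻¹ : F) • (Pi.single u (1 : F) + Pi.single v (1 : F) -
         Pi.single (-u - v) (1 : F)) : ZMod 3 × ZMod 3 → F)

/-- The sum `Σ_{u ∈ s} p_u` in the Matsuo algebra. -/
noncomputable def pSum (F : Type*) [Field F] (s : Finset (ZMod 3 × ZMod 3)) :
    ZMod 3 × ZMod 3 → F :=
  ∑ u ∈ s, Pi.single u 1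

/-- The line of the affine plane of order 3 through `a` with direction `w`
(a coset of the 1-dimensional subspace spanned by `w`). -/
def lineThru (a w : ZMod 3 × ZMod 3) : Finset (ZMod 3 × ZMod 3) :=
  Finset.image (fun t : ZMod 3 => a + t • w) Finset.univ

/-!
Write `σ_S = ∑_{u ∈ S} p_u`. For `v ∉ T`, the sum `∑_{u ∈ T} p_v p_u` is
`(1/4)(|T| p_v + σ_T − σ_{T'})` with `T'` the image of `T` under `u ↦ −v − u`.
Taking `T = P ∖ {v}`, which that map fixes since `−2v = v`, gives `σ_P p_v = 3 p_v`, so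
`1 = σ_P / 3` is the identity. Taking `T` a line `M` parallel to a line `L ∋ v`, `T'` is the
third line `N` of the parallel class, whence `σ_L σ_M = (3/4)(σ_L + σ_M − σ_N)`; together with
`σ_P = σ_L + σ_M + σ_N` this gives `f_L f_M = f_L + f_M − 1`, and expanding
`e_L e_M = 1 − f_L − f_M + f_L f_M` gives `0`.
-/

local notation "P" => ZMod 3 × ZMod 3

section Geometry

variable {a b c x w : P}

lemma mem_lineThru : x ∈ lineThru a w ↔ ∃ t : ZMod 3, a + t • w = x := by
  simp [lineThru]

lemma self_mem_lineThru : a ∈ lineThru a w :=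
  mem_lineThru.2 ⟨0, by simp⟩

lemma lineThru_eq_of_mem (h : x ∈ lineThru a w) : lineThru x w = lineThru a w := by
  obtain ⟨s, rfl⟩ := mem_lineThru.1 h
  ext y
  simp only [mem_lineThru]
  constructor
  · rintro ⟨t, rfl⟩
    exact ⟨s + t, by module⟩
  · rintro ⟨t, rfl⟩
    exact ⟨t - s, by module⟩

lemma disjoint_lineThru (h : lineThru a w ≠ lineThru b w) :
    Disjoint (lineThru a w) (lineThru b w) :=
  disjoint_left.2 fun _ ha hb =>
    h ((lineThru_eq_of_mem ha).symm.trans (lineThru_eq_of_mem hb))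

lemma card_lineThru (hw : w ≠ 0) : #(lineThru a w) = 3 := by
  rw [lineThru, card_image_of_injective _
    fun s t hst => smul_left_injective (ZMod 3) hw (add_left_cancel hst)]
  rfl

lemma image_sub_lineThru : (lineThru b w).image (c - ·) = lineThru (c - b) w := by
  ext y
  simp only [mem_image, mem_lineThru]
  constructor
  · rintro ⟨_, ⟨t, rfl⟩, rfl⟩
    exact ⟨-t, by module⟩
  · rintro ⟨t, rfl⟩
    exact ⟨b - t • w, ⟨-t, by module⟩, by module⟩

lemma neg_sub_self_eq_self : ∀ v : P, -v - v = v := by decide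

lemma lineThru_neg_sub_ne (h : lineThru a w ≠ lineThru b w) :
    lineThru (-a - b) w ≠ lineThru a w := by
  intro hc
  obtain ⟨t, ht⟩ := mem_lineThru.1 (hc ▸ self_mem_lineThru : -a - b ∈ lineThru a w)
  refine h (lineThru_eq_of_mem (mem_lineThru.2 ⟨-t, ?_⟩)).symm
  rw [← neg_sub_self_eq_self a]
  linear_combination (norm := module) -ht

lemma disjoint_union_lineThru_neg_sub (h : lineThru a w ≠ lineThru b w) :
    Disjoint (lineThru a w ∪ lineThru b w) (lineThru (-a - b) w) := by
  have hb : lineThru (-a - b) w ≠ lineThru b w := by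
    simpa only [neg_sub_comm, sub_neg_eq_add] using lineThru_neg_sub_ne h.symm
  exact disjoint_union_left.2
    ⟨disjoint_lineThru (lineThru_neg_sub_ne h).symm, disjoint_lineThru hb.symm⟩

lemma lineThru_union_eq_univ (hw : w ≠ 0) (h : lineThru a w ≠ lineThru b w) :
    lineThru a w ∪ lineThru b w ∪ lineThru (-a - b) w = univ := by
  apply eq_univ_of_card
  rw [card_union_of_disjoint (disjoint_union_lineThru_neg_sub h),
    card_union_of_disjoint (disjoint_lineThru h), card_lineThru hw, card_lineThru hw,
    card_lineThru hw]
  rfl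

end Geometry

lemma four_ne_zero_of_two_ne_zero {R : Type*} [Semiring R] [NoZeroDivisors R]
    (h2 : (2 : R) ≠ 0) : (4 : R) ≠ 0 := by
  rw [show (4 : R) = 2 * 2 by norm_num]
  exact mul_ne_zero h2 h2

noncomputable def basisMul (F : Type*) [Field F] (u v : P) : P → F :=
  if u = v then Pi.single u 1
  else (4⁻¹ : F) • (Pi.single u 1 + Pi.single v 1 - Pi.single (-u - v) 1)

section Algebra

variable {F : Type*} [Field F]

lemma mMul_eq_sum_basisMul (x y : P → F) :
    mMul F x y = ∑ u, ∑ v, (x u * y v) • basisMul F u v := rfl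

lemma basisMul_comm (u v : P) : basisMul F u v = basisMul F v u := by
  unfold basisMul
  rcases eq_or_ne u v with rfl | h
  · rfl
  · rw [if_neg h, if_neg h.symm, neg_sub_comm, add_comm (Pi.single u 1)]

lemma mMul_comm (x y : P → F) : mMul F x y = mMul F y x := by
  rw [mMul_eq_sum_basisMul, mMul_eq_sum_basisMul, sum_comm]
  simp only [mul_comm (x _), basisMul_comm (F := F) _ (_ : P)]

lemma mMul_sub_left (x x' y : P → F) : mMul F (x - x') y = mMul F x y - mMul F x' y := by
  simp only [mMul_eq_sum_basisMul, Pi.sub_apply, sub_mul, sub_smul, sum_sub_distrib]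

lemma mMul_sub_right (x y y' : P → F) : mMul F x (y - y') = mMul F x y - mMul F x y' := by
  rw [mMul_comm, mMul_sub_left, mMul_comm y, mMul_comm y']

lemma mMul_smul_left (c : F) (x y : P → F) : mMul F (c • x) y = c • mMul F x y := by
  simp only [mMul_eq_sum_basisMul, Pi.smul_apply, smul_eq_mul, mul_assoc, mul_smul, smul_sum]

lemma mMul_smul_right (c : F) (x y : P → F) : mMul F x (c • y) = c • mMul F x y := by
  rw [mMul_comm, mMul_smul_left, mMul_comm y]

lemma pSum_apply (s : Finset P) (u : P) : pSum F s u = if u ∈ s then 1 else 0 := by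
  simp [pSum, Finset.sum_apply, Pi.single_apply]

lemma mMul_pSum_pSum (s t : Finset P) :
    mMul F (pSum F s) (pSum F t) = ∑ u ∈ s, ∑ v ∈ t, basisMul F u v := by
  simp [mMul_eq_sum_basisMul, pSum_apply, ite_smul, sum_ite_mem]

lemma sum_basisMul_of_notMem {u : P} {t : Finset P} (hu : u ∉ t) :
    ∑ v ∈ t, basisMul F u v =
      (4⁻¹ : F) • ((#t : F) • Pi.single u 1 + pSum F t - pSum F (t.image (-u - ·))) := by
  have hne : ∀ v ∈ t, basisMul F u v =
      (4⁻¹ : F) • (Pi.single u 1 + Pi.single v 1 - Pi.single (-u - v) 1) := fun v hv =>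
    if_neg (ne_of_mem_of_not_mem hv hu).symm
  rw [sum_congr rfl hne, ← smul_sum, sum_sub_distrib, sum_add_distrib, sum_const, pSum, pSum,
    sum_image fun _ _ _ _ h => sub_right_injective h, Nat.cast_smul_eq_nsmul]

lemma sum_basisMul_left (h2 : (2 : F) ≠ 0) (v : P) :
    ∑ u, basisMul F u v = (3 : F) • Pi.single v 1 := by
  have h4 := four_ne_zero_of_two_ne_zero h2
  have himage : (univ.erase v).image (-v - ·) = univ.erase v := by
    rw [image_erase (sub_right_injective), neg_sub_self_eq_self,
      image_univ_of_surjective (f := (-v - ·)) (Equiv.subLeft (-v)).surjective]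
  simp_rw [basisMul_comm (F := F) _ v]
  rw [← add_sum_erase _ _ (mem_univ v), sum_basisMul_of_notMem (notMem_erase v univ), himage,
    basisMul, if_pos rfl, card_erase_of_mem (mem_univ v), card_univ, add_sub_cancel_right,
    smul_smul, show Fintype.card P - 1 = 8 from rfl]
  match_scalars
  field_simp
  norm_num

lemma mMul_pSum_univ_left (h2 : (2 : F) ≠ 0) (x : P → F) :
    mMul F (pSum F univ) x = (3 : F) • x := by
  simp only [mMul_eq_sum_basisMul, pSum_apply, if_pos (mem_univ _), one_mul]
  rw [sum_comm]
  simp only [← smul_sum, sum_basisMul_left h2, smul_comm (x _)]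
  rw [← pi_eq_sum_univ']

lemma mMul_one_left (h2 : (2 : F) ≠ 0) (h3 : (3 : F) ≠ 0) (x : P → F) :
    mMul F ((3⁻¹ : F) • pSum F univ) x = x := by
  rw [mMul_smul_left, mMul_pSum_univ_left h2, inv_smul_smul₀ h3]

lemma mMul_one_right (h2 : (2 : F) ≠ 0) (h3 : (3 : F) ≠ 0) (x : P → F) :
    mMul F x ((3⁻¹ : F) • pSum F univ) = x := by
  rw [mMul_comm, mMul_one_left h2 h3]

end Algebra

section Lines

variable {F : Type*} [Field F] {a b w : P}

lemma neg_sub_mem_lineThru {u : P} (hu : u ∈ lineThru a w) : -u - b ∈ lineThru (-a - b) w := by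
  obtain ⟨s, rfl⟩ := mem_lineThru.1 hu
  exact mem_lineThru.2 ⟨-s, by module⟩

lemma mMul_pSum_lineThru (hw : w ≠ 0) (h : lineThru a w ≠ lineThru b w) :
    mMul F (pSum F (lineThru a w)) (pSum F (lineThru b w)) =
      (3 / 4 : F) •
        (pSum F (lineThru a w) + pSum F (lineThru b w) - pSum F (lineThru (-a - b) w)) := by
  have hrow : ∀ u ∈ lineThru a w, ∑ v ∈ lineThru b w, basisMul F u v = (4⁻¹ : F) •
      ((3 : F) • Pi.single u 1 + pSum F (lineThru b w) - pSum F (lineThru (-a - b) w)) := by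
    intro u hu
    rw [sum_basisMul_of_notMem (disjoint_left.1 (disjoint_lineThru h) hu), image_sub_lineThru,
      lineThru_eq_of_mem (neg_sub_mem_lineThru hu), card_lineThru hw, Nat.cast_ofNat]
  rw [mMul_pSum_pSum, sum_congr rfl hrow, ← smul_sum, sum_sub_distrib, sum_add_distrib, sum_const,
    sum_const, ← smul_sum, card_lineThru hw, ← pSum]
  module

lemma pSum_univ_eq_add (hw : w ≠ 0) (h : lineThru a w ≠ lineThru b w) :
    pSum F univ =
      pSum F (lineThru a w) + pSum F (lineThru b w) + pSum F (lineThru (-a - b) w) := by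
  rw [← lineThru_union_eq_univ hw h, pSum, sum_union (disjoint_union_lineThru_neg_sub h),
    sum_union (disjoint_lineThru h)]
  rfl

end Lines

/-- If `char F ∉ {2,3}` and `L`, `M` are two distinct parallel lines of the
affine plane of order 3, then `e_L e_M = 0`; equivalently `f_L f_M = f_L + f_M − 1`. -/
theorem stmt_7 (F : Type*) [Field F] (h2 : (2 : F) ≠ 0) (h3 : (3 : F) ≠ 0) :
    ∀ a b w : ZMod 3 × ZMod 3, w ≠ 0 → lineThru a w ≠ lineThru b w →
      (let one : ZMod 3 × ZMod 3 → F := (3⁻¹ : F) • pSum F Finset.univ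
      let fL : ZMod 3 × ZMod 3 → F := (2 / 3 : F) • pSum F (lineThru a w)
      let fM : ZMod 3 × ZMod 3 → F := (2 / 3 : F) • pSum F (lineThru b w)
      mMul F (one - fL) (one - fM) = 0 ∧ mMul F fL fM = fL + fM - one) := by
  intro a b w hw h one fL fM
  have h4 := four_ne_zero_of_two_ne_zero h2
  have hf : mMul F fL fM = fL + fM - one := by
    simp only [fL, fM, one, mMul_smul_left, mMul_smul_right, mMul_pSum_lineThru hw h,
      pSum_univ_eq_add hw h]
    match_scalars <;> field_simp <;> ring
  refine ⟨?_, hf⟩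
  rw [mMul_sub_left, mMul_sub_right, mMul_sub_right, mMul_one_left h2 h3, mMul_one_left h2 h3,
    mMul_one_right h2 h3, hf]
  abel
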